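/- arXiv:1003.0637 — 4 statements merged into one kernel-verified Lean document; each statement's English description precedes it below -/
import Mathlib

section
/- If three vectors in (ℤ/2)^l are linearly independent over ℤ/2, then the three integer vectors in ℤ^l obtained by lifting each coordinate from {0,1} ⊂ ℤ/2 to {0,1} ⊂ ℤ form a set that extends to a basis of ℤ^l (i.e., the subgroup they generate is a direct summand of ℤ^l of rank 3). -/
/-!
Mod 2 the three vectors form a 3 × l matrix of rank 3, so some three columns `c` give an
invertible 3 × 3 minor. Its 0/1 lift to ℤ has odd determinant, while every 3 × 3 matrix with
entries in {0, 1} has determinant of absolute value at most 2; hence the lifted minor is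
unimodular. Restricting to the coordinates `c` then maps the span of the lifted vectors
isomorphically onto ℤ³, and the vectors vanishing on `c` form a complement.
-/

open Matrix Submodule

theorem LinearMap.isCompl_range_ker_of_bijective_comp {R M N P : Type*} [Ring R]
    [AddCommGroup M] [Module R M] [AddCommGroup N] [Module R N] [AddCommGroup P] [Module R P]
    {f : N →ₗ[R] M} {π : M →ₗ[R] P} (h : Function.Bijective (π ∘ₗ f)) :
    IsCompl (LinearMap.range f) (LinearMap.ker π) := by
  constructor
  · rw [disjoint_def]
    rintro _ ⟨y, rfl⟩ hy
    have hy0 : y = 0 := h.injective (by simpa using hy)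
    simp [hy0]
  · rw [codisjoint_iff_exists_add_eq]
    intro x
    obtain ⟨y, hy⟩ := h.surjective (π x)
    refine ⟨f y, x - f y, LinearMap.mem_range_self f y, ?_, add_sub_cancel _ _⟩
    simpa [sub_eq_zero] using hy.symm

theorem Matrix.exists_isUnit_submatrix_of_linearIndependent {K m ι : Type*} [Field K]
    [Fintype m] [DecidableEq m] [Fintype ι] {v : m → ι → K} (hv : LinearIndependent K v) :
    ∃ c : m → ι, IsUnit ((of v).submatrix id c) := by
  have hcols : span K (Set.range (of v).col) = ⊤ := by
    refine eq_top_of_finrank_eq ?_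
    rw [← rank_eq_finrank_span_cols, LinearIndependent.rank_matrix (M := of v) hv,
      Module.finrank_fintype_fun_eq_card]
  obtain ⟨κ, a, -, hspan, hli⟩ := exists_linearIndependent' K (of v).col
  let b := Module.Basis.mk hli (by rw [hspan, hcols])
  let e := (Pi.basisFun K m).indexEquiv b
  exact ⟨a ∘ e, linearIndependent_cols_iff_isUnit.mp (hli.comp e e.injective)⟩

set_option maxRecDepth 10000 in
theorem Matrix.abs_det_map_val_le_two (A : Matrix (Fin 3) (Fin 3) (ZMod 2)) :
    |(A.map fun x => (x.val : ℤ)).det| ≤ 2 := by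
  rw [det_fin_three]
  simp only [map_apply]
  revert A
  decide

theorem Matrix.isUnit_map_val_of_isUnit {A : Matrix (Fin 3) (Fin 3) (ZMod 2)} (hA : IsUnit A) :
    IsUnit (A.map fun x => (x.val : ℤ)) := by
  have hcast : (((A.map fun x => (x.val : ℤ)).det : ℤ) : ZMod 2) = A.det := by
    rw [← eq_intCast (Int.castRingHom (ZMod 2)), RingHom.map_det]
    congr
    ext i j
    simp
  have hodd : ¬ (2 : ℤ) ∣ (A.map fun x => (x.val : ℤ)).det := fun h =>
    ((isUnit_iff_isUnit_det A).mp hA).ne_zero <|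
      hcast ▸ (ZMod.intCast_zmod_eq_zero_iff_dvd _ 2).mpr h
  have hbound := abs_le.mp (abs_det_map_val_le_two A)
  rw [isUnit_iff_isUnit_det, Int.isUnit_iff]
  omega

theorem lift_of_linearIndependent_mod_two_is_unimodular (l : ℕ)
    (v : Fin 3 → (Fin l → ZMod 2))
    (hv : LinearIndependent (ZMod 2) v) :
    LinearIndependent ℤ (fun a : Fin 3 => fun i : Fin l => ((v a i).val : ℤ)) ∧
    ∃ N : Submodule ℤ (Fin l → ℤ),
      IsCompl (Submodule.span ℤ
        (Set.range (fun a : Fin 3 => fun i : Fin l => ((v a i).val : ℤ)))) N := by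
  set w : Fin 3 → Fin l → ℤ := fun a i => ((v a i).val : ℤ)
  obtain ⟨c, hc⟩ := exists_isUnit_submatrix_of_linearIndependent hv
  set D := ((of v).submatrix id c).map fun x => (x.val : ℤ)
  set π := LinearMap.funLeft ℤ ℤ c
  have hπ : π ∘ₗ Fintype.linearCombination ℤ w = D.vecMulLinear := by
    ext x b
    simp [π, D, w, vecMul, dotProduct, Fintype.linearCombination_apply, Finset.sum_apply]
  have hD : IsUnit D := isUnit_map_val_of_isUnit hc
  have hbij : Function.Bijective (π ∘ₗ Fintype.linearCombination ℤ w) := by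
    rw [hπ]
    exact ⟨vecMul_injective_of_isUnit hD, vecMul_surjective_iff_isUnit.mpr hD⟩
  refine ⟨linearIndependent_iff_injective_fintypeLinearCombination.mpr
    (hbij.injective.of_comp (f := π)), LinearMap.ker π, ?_⟩
  rw [← Fintype.range_linearCombination]
  exact LinearMap.isCompl_range_ker_of_bijective_comp hbij
end

section
/- If q divides l, then there exists a q-regular coloring of the nonzero vectors of (ℤ/2)^l using exactly (2^l − 1)/(2^q − 1) colors: identify (ℤ/2)^l with F_{2^q}^{l/q} and color two vectors alike iff they span the same F_{2^q}-line. -/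
open Module
open scoped LinearAlgebra.Projectivization

namespace Projectivization

section lineThrough

variable (K : Type*) {V : Type*} [DivisionRing K] [AddCommGroup V] [Module K V]

open Classical in
/-- The point of `ℙ K V` spanned by `v`; at `v = 0` it is an arbitrary point. -/
noncomputable def lineThrough [Nonempty (ℙ K V)] (v : V) : ℙ K V :=
  if hv : v = 0 then Classical.arbitrary _ else mk K v hv

variable [Nonempty (ℙ K V)]

theorem lineThrough_of_ne_zero {v : V} (hv : v ≠ 0) : lineThrough K v = mk K v hv :=
  by simp [lineThrough, hv]

theorem exists_ne_zero_lineThrough_eq (x : ℙ K V) : ∃ v ≠ 0, lineThrough K v = x :=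
  ⟨x.rep, x.rep_nonzero, by rw [lineThrough_of_ne_zero K x.rep_nonzero, mk_rep]⟩

theorem mem_submodule_of_lineThrough_eq {v : V} (hv : v ≠ 0) {x : ℙ K V}
    (h : lineThrough K v = x) : v ∈ x.submodule := by
  rw [← h, lineThrough_of_ne_zero K hv, submodule_mk]
  exact Submodule.mem_span_singleton_self v

end lineThrough

/-- A point of `ℙ F V` is a copy of `F`, so over a subfield `K` it holds at most `[F : K]`
independent vectors. -/
theorem card_le_finrank_of_linearIndependent {K F V ι : Type*} [Field K] [DivisionRing F]
    [Algebra K F] [Module.Finite K F] [AddCommGroup V] [Module F V] [Module K V]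
    [IsScalarTower K F V] [Fintype ι] {f : ι → V} (hf : LinearIndependent K f) (x : ℙ F V)
    (hx : ∀ i, f i ∈ x.submodule) : Fintype.card ι ≤ finrank K F := by
  rw [submodule_eq] at hx
  choose a ha using fun i ↦ Submodule.mem_span_singleton.mp (hx i)
  have hfa : f = (LinearMap.toSpanSingleton F V x.rep).restrictScalars K ∘ a :=
    funext fun i ↦ (ha i).symm
  exact (LinearIndependent.of_comp _ (hfa ▸ hf)).fintype_card_le_finrank

end Projectivization

open Projectivization in
theorem exists_q_regular_coloring_of_dvd (l q : ℕ) (hl : 0 < l) (hq : 0 < q)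
    (hdvd : q ∣ l) :
    ∃ c : (Fin l → ZMod 2) → Fin ((2 ^ l - 1) / (2 ^ q - 1)),
      (∀ col, ∃ v : Fin l → ZMod 2, v ≠ 0 ∧ c v = col) ∧
      (∀ s : Finset (Fin l → ZMod 2), (∀ v ∈ s, v ≠ 0) → s.card = q + 1 →
        LinearIndependent (ZMod 2) (Subtype.val : {x // x ∈ s} → (Fin l → ZMod 2)) →
        ¬ ∃ col, ∀ v ∈ s, c v = col) := by
  obtain ⟨m, rfl⟩ := hdvd
  have : NeZero m := ⟨by rintro rfl; simp at hl⟩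
  let F := GaloisField 2 q
  have hrank : finrank (ZMod 2) F = q := GaloisField.finrank 2 hq.ne'
  let e : (Fin (q * m) → ZMod 2) ≃ₗ[ZMod 2] (Fin m → F) := LinearEquiv.ofFinrankEq _ _ <| by
    simp [finrank_pi_fintype, hrank, mul_comm]
  have hcard : Nat.card (ℙ F (Fin m → F)) = (2 ^ (q * m) - 1) / (2 ^ q - 1) := by
    rw [card'', Nat.card_fun, GaloisField.card 2 q hq.ne', Nat.card_fin, pow_mul]
  let colors := Finite.equivFinOfCardEq hcard
  refine ⟨fun v ↦ colors (lineThrough F (e v)), fun col ↦ ?_, ?_⟩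
  · obtain ⟨v, hv, hvcol⟩ := exists_ne_zero_lineThrough_eq F (colors.symm col)
    exact ⟨e.symm v, by simpa using hv, by simp [hvcol]⟩
  · rintro s hs0 hs hli ⟨col, hcol⟩
    have hs_le := card_le_finrank_of_linearIndependent (hli.map' e.toLinearMap e.ker)
      (colors.symm col) fun v ↦ mem_submodule_of_lineThrough_eq F (by simpa using hs0 v v.2)
        (colors.eq_symm_apply.mpr (hcol v v.2))
    rw [Fintype.card_coe, hs, hrank] at hs_le
    omega
end

section
/- Let σ be a unimodular set of cardinality k in ℤ^l and let D be the subgroup it generates. Then for any set τ ⊂ ℤ^l such that σ ∪ τ is unimodular and σ ∩ τ = ∅, the image of τ under the quotient map ℤ^l → ℤ^l/D ≅ ℤ^{l−k} is a unimodular set of cardinality |τ|. -/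
/-!
Write `σ = b '' s` for a basis `b` of `ℤ^l` whose range contains `σ ∪ τ`. The span of `b '' s` has
the span of `b '' sᶜ` as a complement, so the classes of the `b i` with `i ∉ s` form a basis of the
quotient, of size `l - k`; by disjointness `τ` lies in `b '' sᶜ` and is mapped injectively onto
part of this basis.
-/

namespace Module.Basis

variable {ι R M : Type*} [Ring R] [AddCommGroup M] [Module R M]

lemma isCompl_span_image_span_range_compl (b : Basis ι R M) (s : Set ι) :
    IsCompl (Submodule.span R (b '' s))
      (Submodule.span R (Set.range (b ∘ ((↑) : (sᶜ : Set ι) → ι)))) := by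
  rw [Set.range_comp, Subtype.range_coe]
  exact b.linearIndependent.isCompl_span_image b.span_eq isCompl_compl

noncomputable def quotientSpanImage (b : Basis ι R M) (s : Set ι) :
    Basis (sᶜ : Set ι) R (M ⧸ Submodule.span R (b '' s)) :=
  (Basis.span (b.linearIndependent.comp _ Subtype.val_injective)).map
    (Submodule.quotientEquivOfIsCompl _ _ (b.isCompl_span_image_span_range_compl s)).symm

@[simp]
lemma quotientSpanImage_apply (b : Basis ι R M) (s : Set ι) (i : (sᶜ : Set ι)) :
    b.quotientSpanImage s i = (Submodule.span R (b '' s)).mkQ (b i) := by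
  simp [quotientSpanImage, Basis.span_apply]

lemma range_quotientSpanImage (b : Basis ι R M) (s : Set ι) :
    Set.range (b.quotientSpanImage s) = (Submodule.span R (b '' s)).mkQ '' (b '' sᶜ) := by
  have h : ⇑(b.quotientSpanImage s) = (Submodule.span R (b '' s)).mkQ ∘ b ∘ Subtype.val :=
    funext (b.quotientSpanImage_apply s)
  rw [h, Set.range_comp, Set.range_comp, Subtype.range_coe]

lemma injOn_mkQ_span_image_compl [Nontrivial R] (b : Basis ι R M) (s : Set ι) :
    Set.InjOn (Submodule.span R (b '' s)).mkQ (b '' sᶜ) := by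
  rintro _ ⟨i, hi, rfl⟩ _ ⟨j, hj, rfl⟩ hij
  rw [← quotientSpanImage_apply b s ⟨i, hi⟩, ← quotientSpanImage_apply b s ⟨j, hj⟩] at hij
  exact congrArg (b ∘ Subtype.val) ((b.quotientSpanImage s).injective hij)

end Module.Basis

theorem quotient_of_unimodular_is_unimodular (l k : ℕ)
    (σ τ : Finset (Fin l → ℤ)) (hk : σ.card = k) (hdisj : Disjoint σ τ)
    (huni : ∃ b : Module.Basis (Fin l) ℤ (Fin l → ℤ),
      ((σ : Set (Fin l → ℤ)) ∪ (τ : Set (Fin l → ℤ))) ⊆ Set.range b) :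
    Set.InjOn (Submodule.span ℤ (σ : Set (Fin l → ℤ))).mkQ (τ : Set (Fin l → ℤ)) ∧
    ∃ b : Module.Basis (Fin (l - k)) ℤ
        ((Fin l → ℤ) ⧸ Submodule.span ℤ (σ : Set (Fin l → ℤ))),
      (Submodule.span ℤ (σ : Set (Fin l → ℤ))).mkQ '' (τ : Set (Fin l → ℤ))
        ⊆ Set.range b := by
  obtain ⟨b, hb⟩ := huni
  obtain ⟨s, hσ⟩ : ∃ s : Set (Fin l), (σ : Set (Fin l → ℤ)) = b '' s :=
    ⟨b ⁻¹' σ, (Set.image_preimage_eq_of_subset (Set.union_subset_iff.mp hb).1).symm⟩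
  have hτ : (τ : Set (Fin l → ℤ)) ⊆ b '' sᶜ := by
    intro x hx
    obtain ⟨i, rfl⟩ := (Set.union_subset_iff.mp hb).2 hx
    have hi : b i ∉ (σ : Set (Fin l → ℤ)) := fun hi => Finset.disjoint_left.mp hdisj hi hx
    rw [hσ, b.injective.mem_set_image] at hi
    exact ⟨i, hi, rfl⟩
  have hcard : Nat.card (sᶜ : Set (Fin l)) = l - k := by
    rw [Nat.card_coe_set_eq, Set.ncard_compl, Nat.card_eq_fintype_card, Fintype.card_fin, ← hk,
      ← Set.ncard_coe_finset, hσ, Set.ncard_image_of_injective s b.injective]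
  rw [hσ]
  refine ⟨(b.injOn_mkQ_span_image_compl s).mono hτ,
    (b.quotientSpanImage s).reindex (Finite.equivFinOfCardEq hcard), ?_⟩
  rw [Module.Basis.range_reindex, Module.Basis.range_quotientSpanImage]
  exact Set.image_mono hτ
end

section
/- If (x₁,…,x_p) and (y₁,…,y_q) form a good pair in (ℤ/2)^l and α is an index with 1 ≤ α ≤ p, then (x₁ + x_α,…, x_{α−1} + x_α, x_α, x_{α+1} + x_α, …, x_p + x_α) and (y₁,…,y_q) also form a good pair. -/
/-!
In characteristic 2 the map `x ↦ x'` (add `x α` to every member but the `α`-th) is an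
involution, and it sends single vectors and pairwise sums of `x` to single vectors or pairwise
sums of `x'`: `x' α + x' b = x b`, `x' a + x' b = x a + x b` and `x' a = x a + x α`. Applied to
`x'` this gives the reverse inclusion, so both families have the same sum set and disjointness
from `y` is inherited. Nonzeroness and distinctness of `x'` reduce to those of `x`, since
`x i + x α = 0` forces `x i = x α`.
-/

/-- The set of single vectors and pairwise sums associated to a family of
vectors in `(ℤ/2)^l`. -/
def sumSet {l p : ℕ} (x : Fin p → (Fin l → ZMod 2)) : Set (Fin l → ZMod 2) :=
  Set.range x ∪ {v | ∃ a b : Fin p, a ≠ b ∧ v = x a + x b}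

/-- A good pair in `(ℤ/2)^l`: two families of nonzero vectors, distinct within
each family, whose associated sets of single vectors and pairwise sums are
disjoint. -/
def GoodPair {l p q : ℕ} (x : Fin p → (Fin l → ZMod 2))
    (y : Fin q → (Fin l → ZMod 2)) : Prop :=
  (∀ i, x i ≠ 0) ∧ (∀ j, y j ≠ 0) ∧
  Function.Injective x ∧ Function.Injective y ∧
  Disjoint (sumSet x) (sumSet y)

section Shear

variable {V : Type*} [AddCommGroup V] {p : ℕ}

def shear (x : Fin p → V) (α : Fin p) : Fin p → V :=
  fun i => if i = α then x α else x i + x α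

@[simp]
lemma shear_apply_self (x : Fin p → V) (α : Fin p) : shear x α α = x α := if_pos rfl

lemma shear_apply_of_ne (x : Fin p → V) {α i : Fin p} (hi : i ≠ α) :
    shear x α i = x i + x α :=
  if_neg hi

@[simp]
lemma shear_shear [Module (ZMod 2) V] (x : Fin p → V) (α : Fin p) :
    shear (shear x α) α = x := by
  ext i : 1
  by_cases hi : i = α
  · subst hi; simp
  · simp [shear_apply_of_ne _ hi, add_assoc, ZModModule.add_self]

lemma add_ne_zero_of_injective [Module (ZMod 2) V] {x : Fin p → V}
    (hx : Function.Injective x) {i α : Fin p} (hi : i ≠ α) : x i + x α ≠ 0 := by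
  rw [← ZModModule.sub_eq_add, sub_ne_zero]
  exact hx.ne hi

lemma shear_ne_zero [Module (ZMod 2) V] {x : Fin p → V} (hx0 : ∀ i, x i ≠ 0)
    (hx : Function.Injective x) (α i : Fin p) : shear x α i ≠ 0 := by
  by_cases hi : i = α
  · subst hi; simpa using hx0 i
  · rw [shear_apply_of_ne _ hi]
    exact add_ne_zero_of_injective hx hi

lemma shear_injective {x : Fin p → V} (hx0 : ∀ i, x i ≠ 0) (hx : Function.Injective x)
    (α : Fin p) : Function.Injective (shear x α) := by
  have key : ∀ j, j ≠ α → shear x α α ≠ shear x α j := fun j hj h => by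
    rw [shear_apply_self, shear_apply_of_ne _ hj, eq_comm, add_eq_right] at h
    exact hx0 j h
  intro i j hij
  by_cases hi : i = α <;> by_cases hj : j = α
  · rw [hi, hj]
  · subst hi; exact absurd hij (key j hj)
  · subst hj; exact absurd hij.symm (key i hi)
  · rw [shear_apply_of_ne _ hi, shear_apply_of_ne _ hj, add_left_inj] at hij
    exact hx hij

end Shear

lemma sumSet_shear_subset {l p : ℕ} (x : Fin p → (Fin l → ZMod 2)) (α : Fin p) :
    sumSet (shear x α) ⊆ sumSet x := by
  rintro _ (⟨i, rfl⟩ | ⟨a, b, hab, rfl⟩)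
  · by_cases hi : i = α
    · subst hi; exact Or.inl ⟨i, (shear_apply_self x i).symm⟩
    · exact Or.inr ⟨i, α, hi, shear_apply_of_ne x hi⟩
  · by_cases ha : a = α
    · subst ha
      refine Or.inl ⟨b, ?_⟩
      rw [shear_apply_self, shear_apply_of_ne x (Ne.symm hab), add_left_comm,
        ZModModule.add_self, add_zero]
    by_cases hb : b = α
    · subst hb
      refine Or.inl ⟨a, ?_⟩
      rw [shear_apply_self, shear_apply_of_ne x hab, add_assoc, ZModModule.add_self, add_zero]
    · exact Or.inr ⟨a, b, hab, by
        rw [shear_apply_of_ne x ha, shear_apply_of_ne x hb, add_comm (x b),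
          ZModModule.add_add_add_cancel]⟩

lemma sumSet_shear {l p : ℕ} (x : Fin p → (Fin l → ZMod 2)) (α : Fin p) :
    sumSet (shear x α) = sumSet x :=
  (sumSet_shear_subset x α).antisymm (by simpa using sumSet_shear_subset (shear x α) α)

theorem goodPair_add_transformation {l p q : ℕ}
    (x : Fin p → (Fin l → ZMod 2)) (y : Fin q → (Fin l → ZMod 2))
    (h : GoodPair x y) (α : Fin p) :
    GoodPair (fun i => if i = α then x α else x i + x α) y := by
  obtain ⟨hx0, hy0, hx, hy, hdisj⟩ := h
  change GoodPair (shear x α) y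
  exact ⟨shear_ne_zero hx0 hx α, hy0, shear_injective hx0 hx α, hy,
    sumSet_shear x α ▸ hdisj⟩
end
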